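/- Let T be a bounded linear operator on a complex Hilbert space H with ‖T‖ ≤ 1, and let n ≥ 2 be an integer. Then w(T)ⁿ ≤ (1/2^{n-1}) w(Tⁿ) + 1 − 1/2^{n-1}. -/
import Mathlib


open scoped InnerProductSpace

variable {H : Type*} [NormedAddCommGroup H] [InnerProductSpace ℂ H] [CompleteSpace H]

/-- The numerical radius of a bounded linear operator. -/
noncomputable def numRadius (T : H →L[ℂ] H) : ℝ :=
  sSup {r : ℝ | ∃ x : H, ‖x‖ = 1 ∧ r = ‖⟪T x, x⟫_ℂ‖}

lemma rp_inner_le (A : H →L[ℂ] H) (hA : ‖A‖ ≤ 1) (x : H) (hx : ‖x‖ = 1) :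
    ‖⟪A x, x⟫_ℂ‖ ≤ 1 := by
  calc ‖⟪A x, x⟫_ℂ‖ ≤ ‖A x‖ * ‖x‖ := norm_inner_le_norm _ _
    _ ≤ ‖A‖ * ‖x‖ * ‖x‖ := by
        gcongr
        exact A.le_opNorm x
    _ ≤ 1 := by rw [hx, mul_one, mul_one]; exact hA

lemma rp_keyA (A B : H →L[ℂ] H) (hA : ‖A‖ ≤ 1) (hB : ‖B‖ ≤ 1) (x : H) (hx : ‖x‖ = 1) :
    (‖⟪A x, x⟫_ℂ‖ + ‖⟪B x, x⟫_ℂ‖) ^ 2 / 2 - 1 ≤ ‖⟪(A * B) x, x⟫_ℂ‖ := by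
  set α := ⟪A x, x⟫_ℂ with hα
  set β := ⟪B x, x⟫_ℂ with hβ
  set y := ContinuousLinearMap.adjoint A x with hy
  set v := y - α • x with hv
  set u := B x - (starRingEnd ℂ β) • x with hu
  have hxx : ⟪x, x⟫_ℂ = 1 := by
    rw [inner_self_eq_norm_sq_to_K, hx]; norm_num
  have hyx : ⟪y, x⟫_ℂ = starRingEnd ℂ α := by
    rw [hy, ContinuousLinearMap.adjoint_inner_left, ← inner_conj_symm]
  have hvx : ⟪v, x⟫_ℂ = 0 := by
    rw [hv, inner_sub_left, inner_smul_left, hyx, hxx, mul_one, sub_self]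
  have hux : ⟪u, x⟫_ℂ = 0 := by
    rw [hu, inner_sub_left, inner_smul_left, hxx, mul_one, Complex.conj_conj, sub_self]
  have hxv : ⟪x, v⟫_ℂ = 0 := by rw [← inner_conj_symm, hvx, map_zero]
  have hxu : ⟪x, u⟫_ℂ = 0 := by rw [← inner_conj_symm, hux, map_zero]
  have hyB : ⟪y, B x⟫_ℂ = starRingEnd ℂ α * starRingEnd ℂ β + ⟪v, u⟫_ℂ := by
    have e1 : y = α • x + v := by rw [hv]; abel
    have e2 : B x = (starRingEnd ℂ β) • x + u := by rw [hu]; abel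
    rw [e1, e2, inner_add_left, inner_add_right, inner_add_right, inner_smul_left,
      inner_smul_right, hxx, inner_smul_left]
    rw [inner_smul_right, hvx, hxu]
    ring
  have h1 : ‖⟪(A * B) x, x⟫_ℂ‖ = ‖⟪y, B x⟫_ℂ‖ := by
    rw [hy, ContinuousLinearMap.adjoint_inner_left, ContinuousLinearMap.mul_apply,
      norm_inner_symm]
  have hadj : ‖ContinuousLinearMap.adjoint A‖ = ‖A‖ :=
    LinearIsometryEquiv.norm_map ContinuousLinearMap.adjoint A
  have hy1 : ‖y‖ ≤ 1 := by
    calc ‖y‖ ≤ ‖ContinuousLinearMap.adjoint A‖ * ‖x‖ := (ContinuousLinearMap.adjoint A).le_opNorm x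
    _ ≤ 1 := by rw [hadj, hx, mul_one]; exact hA
  have hB1 : ‖B x‖ ≤ 1 := by
    calc ‖B x‖ ≤ ‖B‖ * ‖x‖ := B.le_opNorm x
    _ ≤ 1 := by rw [hx, mul_one]; exact hB
  have hy2 : ‖y‖ ^ 2 = ‖α‖ ^ 2 + ‖v‖ ^ 2 := by
    have e1 : y = α • x + v := by rw [hv]; abel
    rw [e1, @norm_add_sq ℂ, inner_smul_left, hxv, mul_zero, map_zero, mul_zero, add_zero,
      norm_smul, hx, mul_one]
  have hu2 : ‖B x‖ ^ 2 = ‖β‖ ^ 2 + ‖u‖ ^ 2 := by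
    have e2 : B x = (starRingEnd ℂ β) • x + u := by rw [hu]; abel
    rw [e2, @norm_add_sq ℂ, inner_smul_left, hxu, mul_zero, map_zero, mul_zero, add_zero,
      norm_smul, hx, mul_one, RCLike.norm_conj]
  have hvu : ‖⟪v, u⟫_ℂ‖ ≤ ‖v‖ * ‖u‖ := norm_inner_le_norm v u
  have hlow : ‖starRingEnd ℂ α * starRingEnd ℂ β‖ - ‖⟪v, u⟫_ℂ‖ ≤ ‖⟪y, B x⟫_ℂ‖ := by
    rw [hyB]
    have := norm_add_le (starRingEnd ℂ α * starRingEnd ℂ β + ⟪v, u⟫_ℂ) (-⟪v, u⟫_ℂ)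
    simp only [add_neg_cancel_right, norm_neg] at this
    linarith
  have hmul : ‖starRingEnd ℂ α * starRingEnd ℂ β‖ = ‖α‖ * ‖β‖ := by
    rw [norm_mul, RCLike.norm_conj, RCLike.norm_conj]
  rw [h1]
  have hv0 : (0:ℝ) ≤ ‖v‖ := norm_nonneg v
  have hu0 : (0:ℝ) ≤ ‖u‖ := norm_nonneg u
  have hvv : ‖v‖ ^ 2 ≤ 1 - ‖α‖ ^ 2 := by nlinarith [norm_nonneg y]
  have huu : ‖u‖ ^ 2 ≤ 1 - ‖β‖ ^ 2 := by nlinarith [norm_nonneg (B x)]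
  nlinarith [sq_nonneg (‖v‖ - ‖u‖)]

lemma rp_scalar_step (c t s a N : ℝ) (hc : 1 ≤ c) (ht0 : 0 ≤ t) (ht1 : t ≤ 1)
    (hs0 : 0 ≤ s) (hst : s ≤ t) (ha : 1 - c * (1 - s) ≤ a)
    (hN0 : 0 ≤ N) (hN : (t + a) ^ 2 / 2 - 1 ≤ N) :
    1 - 2 * c * (1 - t * s) ≤ N := by
  rcases le_or_gt 1 (2 * c * (1 - t * s)) with h | h
  · linarith
  · have hs1 : s ≤ 1 := le_trans hst ht1
    have hf : 0 ≤ 1 + s - 2 * (t * s) := by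
      nlinarith [mul_nonneg hs0 (sub_nonneg.2 ht1)]
    have hD : c * (1 - s) ≤ 2 * c * (1 - t * s) := by
      nlinarith [mul_nonneg (le_trans zero_le_one hc) hf]
    have h1 : 0 ≤ a - (1 - c * (1 - s)) := by linarith
    have h2 : 0 ≤ t + a + t + 1 - c * (1 - s) := by nlinarith
    nlinarith [sq_nonneg (1 - t - c * (1 - s)), mul_nonneg (sub_nonneg.2 ht1) (sub_nonneg.2 hc),
      mul_nonneg h1 h2]

lemma rp_keyB (T : H →L[ℂ] H) (hT : ‖T‖ ≤ 1) (x : H) (hx : ‖x‖ = 1) (n : ℕ) :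
    1 - 2 ^ n * (1 - ‖⟪T x, x⟫_ℂ‖ ^ (n + 1)) ≤ ‖⟪(T ^ (n + 1)) x, x⟫_ℂ‖ := by
  induction n with
  | zero => simp
  | succ n ih =>
    have hTn : ‖T ^ (n + 1)‖ ≤ 1 :=
      le_trans (norm_pow_le' T (Nat.succ_pos n)) (pow_le_one₀ (norm_nonneg T) hT)
    have hk := rp_keyA (T ^ (n + 1)) T hTn hT x hx
    rw [← pow_succ] at hk
    set t := ‖⟪T x, x⟫_ℂ‖ with hts
    set a := ‖⟪(T ^ (n + 1)) x, x⟫_ℂ‖ with has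
    have ht0 : 0 ≤ t := norm_nonneg _
    have ht1 : t ≤ 1 := rp_inner_le T hT x hx
    have hgoal : 1 - 2 * 2 ^ n * (1 - t * t ^ (n + 1)) ≤ ‖⟪(T ^ (n + 2)) x, x⟫_ℂ‖ := by
      apply rp_scalar_step (2 ^ n) t (t ^ (n + 1)) a _ (one_le_pow₀ one_le_two) ht0 ht1
        (pow_nonneg ht0 _) (pow_le_of_le_one ht0 ht1 (Nat.succ_ne_zero n)) ih (norm_nonneg _)
      have : (t + a) ^ 2 = (a + t) ^ 2 := by ring
      rw [this]
      exact hk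
    calc 1 - 2 ^ (n + 1) * (1 - t ^ (n + 1 + 1)) = 1 - 2 * 2 ^ n * (1 - t * t ^ (n + 1)) := by
          ring
      _ ≤ _ := hgoal

lemma rp_bdd (T : H →L[ℂ] H) :
    BddAbove {r : ℝ | ∃ x : H, ‖x‖ = 1 ∧ r = ‖⟪T x, x⟫_ℂ‖} := by
  refine ⟨‖T‖, ?_⟩
  rintro r ⟨x, hx, rfl⟩
  calc ‖⟪T x, x⟫_ℂ‖ ≤ ‖T x‖ * ‖x‖ := norm_inner_le_norm _ _
    _ ≤ ‖T‖ * ‖x‖ * ‖x‖ := by gcongr; exact T.le_opNorm x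
    _ = ‖T‖ := by rw [hx, mul_one, mul_one]

lemma rp_le_numRadius (T : H →L[ℂ] H) (x : H) (hx : ‖x‖ = 1) :
    ‖⟪T x, x⟫_ℂ‖ ≤ numRadius T :=
  le_csSup (rp_bdd T) ⟨x, hx, rfl⟩

lemma rp_numRadius_nonneg (T : H →L[ℂ] H) : 0 ≤ numRadius T := by
  by_cases h : ∃ x : H, ‖x‖ = 1
  · obtain ⟨x, hx⟩ := h
    exact le_trans (norm_nonneg _) (rp_le_numRadius T x hx)
  · have hS : {r : ℝ | ∃ x : H, ‖x‖ = 1 ∧ r = ‖⟪T x, x⟫_ℂ‖} = ∅ := by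
      ext r; simp only [Set.mem_setOf_eq, Set.mem_empty_iff_false, iff_false]
      rintro ⟨x, hx, -⟩
      exact h ⟨x, hx⟩
    rw [numRadius, hS, Real.sSup_empty]

theorem reverse_power (T : H →L[ℂ] H) (hT : ‖T‖ ≤ 1) (n : ℕ) (hn : 2 ≤ n) :
    (numRadius T) ^ n ≤ (1 / 2 ^ (n - 1)) * numRadius (T ^ n) + 1 - 1 / 2 ^ (n - 1) := by
  have hn1 : 1 ≤ n := le_trans one_le_two hn
  have hn0 : n ≠ 0 := by omega
  set C : ℝ := (1 / 2 ^ (n - 1)) * numRadius (T ^ n) + 1 - 1 / 2 ^ (n - 1) with hC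
  have hc0 : (0:ℝ) < 2 ^ (n - 1) := by positivity
  have hc1 : (1:ℝ) ≤ 2 ^ (n - 1) := one_le_pow₀ one_le_two
  have hw0 : 0 ≤ numRadius (T ^ n) := rp_numRadius_nonneg _
  have hC0 : 0 ≤ C := by
    rw [hC]
    have h1 : 1 / (2:ℝ) ^ (n - 1) ≤ 1 := by
      rw [div_le_one hc0]; exact hc1
    have h2 : 0 ≤ (1 / (2:ℝ) ^ (n - 1)) * numRadius (T ^ n) :=
      mul_nonneg (by positivity) hw0
    linarith
  -- every element of the set satisfies r ^ n ≤ C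
  have hmem : ∀ r ∈ {r : ℝ | ∃ x : H, ‖x‖ = 1 ∧ r = ‖⟪T x, x⟫_ℂ‖}, r ^ n ≤ C := by
    rintro r ⟨x, hx, rfl⟩
    set t := ‖⟪T x, x⟫_ℂ‖ with hts
    have hkB := rp_keyB T hT x hx (n - 1)
    rw [Nat.sub_add_cancel hn1] at hkB
    have hle : ‖⟪(T ^ n) x, x⟫_ℂ‖ ≤ numRadius (T ^ n) := rp_le_numRadius (T ^ n) x hx
    have key : 1 - 2 ^ (n - 1) * (1 - t ^ n) ≤ numRadius (T ^ n) := le_trans hkB hle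
    have expand : C = (1 / 2 ^ (n - 1)) * (numRadius (T ^ n) - (1 - 2 ^ (n - 1) * (1 - t ^ n)))
        + t ^ n := by
      rw [hC]; field_simp; ring
    rw [expand]
    have : 0 ≤ (1 / (2:ℝ) ^ (n - 1)) * (numRadius (T ^ n) - (1 - 2 ^ (n - 1) * (1 - t ^ n))) :=
      mul_nonneg (by positivity) (by linarith)
    linarith
  have hsup : numRadius T ≤ C ^ ((n:ℝ)⁻¹) := by
    rw [numRadius]
    apply Real.sSup_le
    · rintro r ⟨x, hx, rfl⟩
      have hr0 : (0:ℝ) ≤ ‖⟪T x, x⟫_ℂ‖ := norm_nonneg _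
      have hrn := hmem _ ⟨x, hx, rfl⟩
      calc ‖⟪T x, x⟫_ℂ‖ = (‖⟪T x, x⟫_ℂ‖ ^ n) ^ ((n:ℝ)⁻¹) :=
            (Real.pow_rpow_inv_natCast hr0 hn0).symm
        _ ≤ C ^ ((n:ℝ)⁻¹) := Real.rpow_le_rpow (by positivity) hrn (by positivity)
    · positivity
  calc (numRadius T) ^ n ≤ (C ^ ((n:ℝ)⁻¹)) ^ n :=
        pow_le_pow_left₀ (rp_numRadius_nonneg T) hsup n
    _ = C := Real.rpow_inv_natCast_pow hC0 hn0
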